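/- arXiv:2303.07097 — 2 statements merged into one kernel-verified Lean document; each statement's English description precedes it below -/
import Mathlib

section
/- If (s,C) and (t,D) are layer points of Γ_k(X), then their least upper bound in Γ_k(X) is again a layer point of Γ_k(X). -/
variable {Z : Type*} [MetricSpace Z]

/-- Vertex set `V_{s,k}(X)` of the degree-Rips complex: points of `X` having at
least `k` other points of `X` within distance `s`. -/
def drVertex (X : Set Z) (k : ℕ) (s : ℝ) : Set Z :=
  {x ∈ X | k ≤ {y ∈ X | y ≠ x ∧ dist x y ≤ s}.ncard}

/-- The generating relation for components: two vertices at distance at most `s`. -/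
def drStep (X : Set Z) (k : ℕ) (s : ℝ) (x y : Z) : Prop :=
  x ∈ drVertex X k s ∧ y ∈ drVertex X k s ∧ dist x y ≤ s

/-- `C` is a degree-Rips component (an element of `π₀ L_{s,k}(X)`): the class of
some vertex `x` under the equivalence relation generated by `drStep`. -/
def drComp (X : Set Z) (k : ℕ) (s : ℝ) (C : Set Z) : Prop :=
  ∃ x ∈ drVertex X k s, C = {y | Relation.ReflTransGen (drStep X k s) x y}

/-- `(t, C)` is a layer point of `Γ_k(X)`: it is an element of the hierarchy, and
every element `(s, D) ≤ (t, C)` with `s < t` has `D` a proper subset of `C`. -/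
def IsLayer (X : Set Z) (k : ℕ) (t : ℝ) (C : Set Z) : Prop :=
  0 ≤ t ∧ drComp X k t C ∧
    ∀ s D, 0 ≤ s → drComp X k s D → s < t → D ⊆ C → D ⊂ C

/-- `(t, C)` is a branch point of `Γ_k(X)`. -/
def IsBranch (X : Set Z) (k : ℕ) (t : ℝ) (C : Set Z) : Prop :=
  0 ≤ t ∧ drComp X k t C ∧
    ((∀ s D, 0 ≤ s → drComp X k s D → s < t → ¬D ⊆ C) ∨
      ∃ s₀, s₀ < t ∧ ∀ s, s₀ ≤ s → s < t →
        ∃ D₁ D₂, drComp X k s D₁ ∧ drComp X k s D₂ ∧ D₁ ≠ D₂ ∧ D₁ ⊆ C ∧ D₂ ⊆ C)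

/-- `(t, D)` is the maximal layer point below the element `(u, C)` of `Γ_k(X)`:
it is a layer point, `(t, D) ≤ (u, C)`, and every layer point below `(u, C)`
is below `(t, D)`. -/
def IsMaxLayerBelow (X : Set Z) (k : ℕ) (u : ℝ) (C : Set Z) (t : ℝ) (D : Set Z) : Prop :=
  IsLayer X k t D ∧ t ≤ u ∧ D ⊆ C ∧
    ∀ t' D', IsLayer X k t' D' → t' ≤ u → D' ⊆ C → t' ≤ t ∧ D' ⊆ D

/-- `t` is a layer parameter of `X`. -/
def IsLayerParam (X : Set Z) (k : ℕ) (t : ℝ) : Prop :=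
  ∃ C, IsLayer X k t C

/-- A stability map `θ : Y → X` (encoded as a map `Z → Z` carrying `Y` into `X`). -/
def IsStabilityMap (X Y : Set Z) (k : ℕ) (r : ℝ) (θ : Z → Z) : Prop :=
  (∀ y ∈ Y, θ y ∈ X) ∧
    ∀ s : ℝ, 0 ≤ s →
      (∀ y₁ y₂, y₁ ∈ drVertex Y k s → y₂ ∈ drVertex Y k s → dist y₁ y₂ ≤ s →
          θ y₁ ∈ drVertex X k (s + 2 * r) ∧ θ y₂ ∈ drVertex X k (s + 2 * r) ∧
          dist (θ y₁) (θ y₂) ≤ s + 2 * r) ∧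
      (∀ x ∈ drVertex X k s, ∃ C, drComp X k (s + 2 * r) C ∧ x ∈ C ∧ θ x ∈ C) ∧
      (∀ y ∈ drVertex Y k s, ∃ D, drComp Y k (s + 2 * r) D ∧ y ∈ D ∧ θ y ∈ D)

/-- Vertices of the degree-Rips complex at scale infinity: points with at least
`k` other points. -/
def drVertexInf (W : Set Z) (k : ℕ) : Set Z :=
  {w ∈ W | k ≤ {w' ∈ W | w' ≠ w}.ncard}

/-- Phase change numbers: distances between distinct vertices at scale infinity. -/
def IsPhaseChange (W : Set Z) (k : ℕ) (t : ℝ) : Prop :=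
  ∃ w₁ ∈ drVertexInf W k, ∃ w₂ ∈ drVertexInf W k, w₁ ≠ w₂ ∧ t = dist w₁ w₂

/-!
Suppose a component `F` at a scale `v < u` contained `E`. Since `(u, E)` is the least upper
bound, `(v, F)` cannot lie above both `(s, C)` and `(t, D)`; say `v < s`. The component at
scale `s` containing `F` contains `C`, hence equals `C`, so `(v, F) ≤ (s, C)` with `v < s`
and `C ⊆ F`, contradicting that `(s, C)` is a layer point.
-/

section DegreeRips

variable {X : Set Z} {k : ℕ}

instance drStep_symm (s : ℝ) : Std.Symm (drStep X k s) where
  symm _ _ h := ⟨h.2.1, h.1, dist_comm (α := Z) _ _ ▸ h.2.2⟩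

theorem drComp_eq_of_subset {s : ℝ} {C C' : Set Z}
    (hC : drComp X k s C) (hC' : drComp X k s C') (hsub : C ⊆ C') : C = C' := by
  obtain ⟨x, -, rfl⟩ := hC
  obtain ⟨x', -, rfl⟩ := hC'
  have hx'x : Relation.ReflTransGen (drStep X k s) x' x := hsub .refl
  ext y
  exact ⟨hx'x.trans, (symm hx'x).trans⟩

theorem drVertex_mono (hX : X.Finite) {v t : ℝ} (hvt : v ≤ t) :
    drVertex X k v ⊆ drVertex X k t := by
  rintro x ⟨hxX, hk⟩
  refine ⟨hxX, hk.trans (Set.ncard_le_ncard ?_ (hX.subset (Set.sep_subset _ _)))⟩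
  rintro y ⟨hyX, hne, hd⟩
  exact ⟨hyX, hne, hd.trans hvt⟩

theorem drStep_mono (hX : X.Finite) {v t : ℝ} (hvt : v ≤ t) :
    drStep X k v ≤ drStep X k t := fun _ _ h =>
  ⟨drVertex_mono hX hvt h.1, drVertex_mono hX hvt h.2.1, h.2.2.trans hvt⟩

theorem drComp.exists_superset_of_le (hX : X.Finite) {v t : ℝ} (hvt : v ≤ t)
    {F : Set Z} (hF : drComp X k v F) : ∃ F', drComp X k t F' ∧ F ⊆ F' := by
  obtain ⟨x, hx, rfl⟩ := hF
  exact ⟨_, ⟨x, drVertex_mono hX hvt hx, rfl⟩,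
    fun y => Relation.ReflTransGen.mono (drStep_mono hX hvt) x y⟩

theorem IsLayer.not_subset_of_lt (hX : X.Finite) {s v : ℝ} {C F : Set Z}
    (hC : IsLayer X k s C) (hv : 0 ≤ v) (hF : drComp X k v F) (hvs : v < s) : ¬C ⊆ F := by
  intro hCF
  obtain ⟨F', hF', hFF'⟩ := hF.exists_superset_of_le hX hvs.le
  have hCF' : C = F' := drComp_eq_of_subset hC.2.1 hF' (hCF.trans hFF')
  exact (hC.2.2 v F hv hF hvs (hCF' ▸ hFF')).2 hCF

end DegreeRips

/-- the least upper bound in `Γ_k(X)` of two layer points is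
again a layer point. -/
theorem lub_of_layer_points_is_layer_point (X : Set Z) (hXfin : X.Finite) (k : ℕ)
    (s t u : ℝ) (C D E : Set Z)
    (hC : IsLayer X k s C) (hD : IsLayer X k t D)
    (hu : 0 ≤ u) (hE : drComp X k u E)
    (hub₁ : s ≤ u ∧ C ⊆ E) (hub₂ : t ≤ u ∧ D ⊆ E)
    (hleast : ∀ v F, 0 ≤ v → drComp X k v F →
      (s ≤ v ∧ C ⊆ F) → (t ≤ v ∧ D ⊆ F) → u ≤ v ∧ E ⊆ F) :
    IsLayer X k u E := by
  refine ⟨hu, hE, fun v F hv hF hvu hFE => ⟨hFE, fun hEF => ?_⟩⟩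
  by_cases hvs : v < s
  · exact hC.not_subset_of_lt hXfin hv hF hvs (hub₁.2.trans hEF)
  by_cases hvt : v < t
  · exact hD.not_subset_of_lt hXfin hv hF hvt (hub₂.2.trans hEF)
  obtain ⟨huv, -⟩ :=
    hleast v F hv hF ⟨not_lt.mp hvs, hub₁.2.trans hEF⟩ ⟨not_lt.mp hvt, hub₂.2.trans hEF⟩
  exact hvu.not_ge huv
end

section
/- Suppose θ : Y → X is a stability map, t is a layer parameter of X, no layer parameter u of X satisfies t < u ≤ t+2r, and the map i : π₀L_{t,k}(X) → π₀L_{t,k}(Y) is surjective (as holds, in the paper's setting, when t > r and the Hausdorff distance between the spaces of k+1 distinct points of X and Y is less than r). Then i : π₀L_{t,k}(X) → π₀L_{t,k}(Y) is a bijection. -/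
variable {Z : Type*} [MetricSpace Z]

/-!
Two vertices of `X` in a common component of `Y` at scale `t` are joined in `X` at scale
`t + 2r`: push a chain in `Y` forward by `θ` and join each endpoint to its image. If they
were not already joined at scale `t`, there would be a least scale `u ∈ (t, t + 2r]` at which
they are joined (the filtration of a finite set changes only at its finitely many distances),
and their component at scale `u` would be a layer point, since no component at a smaller
scale contains both of them.
-/

section DegreeRips

open Topology

variable {W : Set Z} {k : ℕ}

instance drStep.instSymm (s : ℝ) : Std.Symm (drStep W k s) :=
  ⟨fun _ _ h => ⟨h.2.1, h.1, by rw [dist_comm]; exact h.2.2⟩⟩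

lemma drVertex_mono_s13 (hW : W.Finite) {s s' : ℝ} (h : s ≤ s') :
    drVertex W k s ⊆ drVertex W k s' := by
  rintro x ⟨hx, hk⟩
  refine ⟨hx, hk.trans (Set.ncard_le_ncard ?_ (hW.subset (Set.sep_subset _ _)))⟩
  rintro y ⟨hy, hne, hd⟩
  exact ⟨hy, hne, hd.trans h⟩

lemma drStep_mono_s13 (hW : W.Finite) {s s' : ℝ} (h : s ≤ s') :
    drStep W k s ≤ drStep W k s' := fun _ _ hst =>
  ⟨drVertex_mono_s13 hW h hst.1, drVertex_mono_s13 hW h hst.2.1, hst.2.2.trans h⟩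

lemma reflTransGen_drStep_mono (hW : W.Finite) {s s' : ℝ} (h : s ≤ s') {x y : Z}
    (hxy : Relation.ReflTransGen (drStep W k s) x y) :
    Relation.ReflTransGen (drStep W k s') x y :=
  Relation.ReflTransGen.mono (drStep_mono_s13 hW h) x y hxy

lemma drComp.reflTransGen {s : ℝ} {C : Set Z} (hC : drComp W k s C) {a b : Z}
    (ha : a ∈ C) (hb : b ∈ C) : Relation.ReflTransGen (drStep W k s) a b := by
  obtain ⟨x, -, rfl⟩ := hC
  exact (symm_of _ ha).trans hb

lemma setOf_reflTransGen_drStep_eq {s : ℝ} {x x' : Z}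
    (h : Relation.ReflTransGen (drStep W k s) x x') :
    {y | Relation.ReflTransGen (drStep W k s) x y} =
      {y | Relation.ReflTransGen (drStep W k s) x' y} :=
  Set.ext fun _ => ⟨(symm_of _ h).trans, h.trans⟩

lemma drStep_le_of_forall_dist_le {a b : ℝ} (hab : a ≤ b)
    (hgap : ∀ x ∈ W, ∀ y ∈ W, dist x y ≤ b → dist x y ≤ a) :
    drStep W k b ≤ drStep W k a := by
  have hvertex : drVertex W k b ⊆ drVertex W k a := by
    rintro z ⟨hz, hk⟩
    have hnbhd : {w ∈ W | w ≠ z ∧ dist z w ≤ b} = {w ∈ W | w ≠ z ∧ dist z w ≤ a} := by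
      ext w
      exact ⟨fun ⟨hw, hne, hd⟩ => ⟨hw, hne, hgap z hz w hw hd⟩,
        fun ⟨hw, hne, hd⟩ => ⟨hw, hne, hd.trans hab⟩⟩
    exact ⟨hz, hnbhd ▸ hk⟩
  exact fun x y h => ⟨hvertex h.1, hvertex h.2.1, hgap x h.1.1 y h.2.1.1 h.2.2⟩

/-- No distance of the finite set `W` lies in `(u, v]` once `v` is close enough to `u`. -/
lemma eventually_drStep_le (hW : W.Finite) (u : ℝ) :
    ∀ᶠ v in 𝓝[>] u, drStep W k v ≤ drStep W k u := by
  have hnext : ∀ᶠ v in 𝓝[>] u, ∀ d ∈ Set.image2 dist W W, u < d → v < d :=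
    (Filter.eventually_all_finite (hW.image2 dist hW)).2 fun d _ =>
      Filter.eventually_imp_distrib_left.2 fun hud =>
        Filter.mem_of_superset (Ioo_mem_nhdsGT hud) fun _ hv => hv.2
  filter_upwards [hnext, self_mem_nhdsWithin] with v hv huv
  refine drStep_le_of_forall_dist_le (le_of_lt huv) fun x hx y hy hd => ?_
  by_contra! hlt
  exact (hd.trans_lt (hv _ ⟨x, hx, y, hy, rfl⟩ hlt)).false

lemma exists_minimal_scale_reflTransGen_drStep (hW : W.Finite) {a b : ℝ} {x y : Z}
    (ha : ¬Relation.ReflTransGen (drStep W k a) x y)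
    (hb : Relation.ReflTransGen (drStep W k b) x y) :
    ∃ u, a < u ∧ u ≤ b ∧ Relation.ReflTransGen (drStep W k u) x y ∧
      ∀ v < u, ¬Relation.ReflTransGen (drStep W k v) x y := by
  set S := {v | Relation.ReflTransGen (drStep W k v) x y}
  have hlower : ∀ v ∈ S, a < v := fun v hv =>
    lt_of_not_ge fun hva => ha (reflTransGen_drStep_mono hW hva hv)
  have hbdd : BddBelow S := ⟨a, fun v hv => (hlower v hv).le⟩
  have hmem : sInf S ∈ S := by
    obtain ⟨w, hw, hstable⟩ :=
      mem_nhdsGT_iff_exists_Ioo_subset.1 (eventually_drStep_le hW (sInf S))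
    obtain ⟨v, hvS, hvw⟩ := exists_lt_of_csInf_lt (s := S) ⟨b, hb⟩ hw
    rcases (csInf_le hbdd hvS).eq_or_lt with heq | hlt
    · exact heq ▸ hvS
    · exact Relation.ReflTransGen.mono (hstable ⟨hlt, hvw⟩) x y hvS
  exact ⟨sInf S, hlower _ hmem, csInf_le hbdd hb, hmem,
    fun v hv => notMem_of_lt_csInf (s := S) hv hbdd⟩

lemma isLayer_of_minimal_scale_reflTransGen_drStep {u : ℝ} (hu : 0 ≤ u)
    {x y : Z} (hx : x ∈ drVertex W k u) (hxy : Relation.ReflTransGen (drStep W k u) x y)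
    (hmin : ∀ v < u, ¬Relation.ReflTransGen (drStep W k v) x y) :
    IsLayer W k u {z | Relation.ReflTransGen (drStep W k u) x z} := by
  refine ⟨hu, ⟨x, hx, rfl⟩, fun s D _ hD hsu hDC => ?_⟩
  refine Set.ssubset_iff_subset_ne.2 ⟨hDC, fun hDeq => hmin s hsu (hD.reflTransGen ?_ ?_)⟩
  · exact hDeq ▸ Relation.ReflTransGen.refl
  · exact hDeq ▸ hxy

end DegreeRips

lemma IsStabilityMap.reflTransGen_drStep {X Y : Set Z} {k : ℕ} {r : ℝ} {θ : Z → Z}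
    (hθ : IsStabilityMap X Y k r θ) {s : ℝ} (hs : 0 ≤ s) {x₁ x₂ : Z}
    (hx₁ : x₁ ∈ drVertex X k s) (hx₂ : x₂ ∈ drVertex X k s)
    (hY : Relation.ReflTransGen (drStep Y k s) x₁ x₂) :
    Relation.ReflTransGen (drStep X k (s + 2 * r)) x₁ x₂ := by
  obtain ⟨hpush, hjoinX, -⟩ := hθ.2 s hs
  have hjoin : ∀ x ∈ drVertex X k s, Relation.ReflTransGen (drStep X k (s + 2 * r)) x (θ x) :=
    fun x hx =>
      let ⟨_, hC, hxC, hθC⟩ := hjoinX x hx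
      hC.reflTransGen hxC hθC
  have himage : Relation.ReflTransGen (drStep X k (s + 2 * r)) (θ x₁) (θ x₂) :=
    Relation.ReflTransGen.lift θ (fun a b h => hpush a b h.1 h.2.1 h.2.2) _ _ hY
  exact (hjoin x₁ hx₁).trans (himage.trans (symm_of _ (hjoin x₂ hx₂)))

theorem i_bijection_on_components_general (X Y : Set Z)
    (hXfin : X.Finite)
    (k : ℕ) (r : ℝ) (θ : Z → Z) (hθ : IsStabilityMap X Y k r θ)
    (t : ℝ) (ht : IsLayerParam X k t)
    (hgap : ∀ u, t < u → u ≤ t + 2 * r → ¬IsLayerParam X k u)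
    (hsurj : ∀ D, drComp Y k t D → ∃ C, drComp X k t C ∧ C ⊆ D) :
    (∀ D, drComp Y k t D → ∃ C, drComp X k t C ∧ C ⊆ D) ∧
      ∀ C₁ C₂ D, drComp X k t C₁ → drComp X k t C₂ → drComp Y k t D →
        C₁ ⊆ D → C₂ ⊆ D → C₁ = C₂ := by
  obtain ⟨-, ht0, -⟩ := ht
  refine ⟨hsurj, ?_⟩
  rintro C₁ C₂ D ⟨x₁, hx₁, rfl⟩ ⟨x₂, hx₂, rfl⟩ hD h₁ h₂
  refine setOf_reflTransGen_drStep_eq (by_contra fun hsplit => ?_)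
  have hmerged : Relation.ReflTransGen (drStep X k (t + 2 * r)) x₁ x₂ :=
    hθ.reflTransGen_drStep ht0 hx₁ hx₂
      (hD.reflTransGen (h₁ Relation.ReflTransGen.refl) (h₂ Relation.ReflTransGen.refl))
  obtain ⟨u, htu, hu, hxy, hmin⟩ :=
    exists_minimal_scale_reflTransGen_drStep hXfin hsplit hmerged
  exact hgap u htu hu ⟨_, isLayer_of_minimal_scale_reflTransGen_drStep
    (ht0.trans htu.le) (drVertex_mono_s13 hXfin htu.le hx₁) hxy hmin⟩

/-- for a stability map `θ : Y → X`, if `t` is a layer parameter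
of `X`, no layer parameter `u` of `X` satisfies `t < u ≤ t + 2r`, and
`i : π₀ L_{t,k}(X) → π₀ L_{t,k}(Y)` is surjective, then `i` is a bijection
(stated as surjectivity and injectivity of the containment relation defining
`i`). -/
theorem i_bijection_on_components (X Y : Set Z)
    (hXfin : X.Finite) (hYfin : Y.Finite) (hXY : X ⊆ Y)
    (k : ℕ) (r : ℝ) (hr : 0 < r) (θ : Z → Z) (hθ : IsStabilityMap X Y k r θ)
    (t : ℝ) (ht : IsLayerParam X k t)
    (hgap : ∀ u, t < u → u ≤ t + 2 * r → ¬IsLayerParam X k u)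
    (hsurj : ∀ D, drComp Y k t D → ∃ C, drComp X k t C ∧ C ⊆ D) :
    (∀ D, drComp Y k t D → ∃ C, drComp X k t C ∧ C ⊆ D) ∧
      ∀ C₁ C₂ D, drComp X k t C₁ → drComp X k t C₂ → drComp Y k t D →
        C₁ ⊆ D → C₂ ⊆ D → C₁ = C₂ :=
  i_bijection_on_components_general X Y hXfin k r θ hθ t ht hgap hsurj
end
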